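/- Let c = (c_1 ≥ … ≥ c_{n−r}) be non-increasing non-negative integers, 0 ≤ x ≤ n − r, d_i = c_{i+x} for 1 ≤ i ≤ n−r−x, and let ã = (ã_1, …, ã_x) be a non-increasing integer sequence with Σ_{i=1}^{x} ã_i = Σ_{i=1}^{x} c_i and (c_1, …, c_x) ≺ ã (ordinary majorization). Then c ≺' (d, ã). -/

import Mathlib

/-- Generalized majorization `g ≺' (d, a)` for 1-indexed integer sequences:
`d` of length `m`, `a` of length `s`, `g` of length `m + s`.
Conventions `d i = +∞` for `i < 1` and `d (m+1) = -∞` are encoded in the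
definition of the set whose infimum is `h j`. -/
def GenMaj (m s : ℕ) (d a g : ℕ → ℤ) : Prop :=
  (∀ i, 1 ≤ i → i ≤ m → g (i + s) ≤ d i) ∧
  (∀ j, 1 ≤ j → j ≤ s →
    ∑ i ∈ Finset.Icc 1 (sInf {i : ℕ | j ≤ i ∧ (m < i - j + 1 ∨ d (i - j + 1) < g i)}), g i
      - ∑ i ∈ Finset.Icc 1
          (sInf {i : ℕ | j ≤ i ∧ (m < i - j + 1 ∨ d (i - j + 1) < g i)} - j), d i
      ≤ ∑ i ∈ Finset.Icc 1 j, a i) ∧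
  (∑ i ∈ Finset.Icc 1 (m + s), g i
    = ∑ i ∈ Finset.Icc 1 m, d i + ∑ i ∈ Finset.Icc 1 s, a i)

/-! Since `d` is a tail of `c`, the first and third clauses are immediate. For the second,
below `h_j` the defining inequality fails, i.e. `c_i ≤ d_{i-j+1}`, so monotonicity of `c` gives
`c_{j+k} ≤ c_{j+k-1} ≤ d_k` for `1 ≤ k ≤ h_j - j`. Hence
`Σ_{i ≤ h_j} c_i - Σ_{i ≤ h_j - j} d_i ≤ Σ_{i ≤ j} c_i ≤ Σ_{i ≤ j} ã_i`. -/

open Finset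

theorem Finset.sum_Icc_one_add {M : Type*} [AddCommMonoid M] (f : ℕ → M) (a b : ℕ) :
    ∑ i ∈ Icc 1 (a + b), f i = ∑ i ∈ Icc 1 a, f i + ∑ i ∈ Icc 1 b, f (i + a) := by
  induction b with
  | zero => simp
  | succ b ih =>
    rw [← add_assoc, sum_Icc_succ_top (by omega), ih, sum_Icc_succ_top (by omega), add_assoc,
      add_comm a b, Nat.add_right_comm]

/-- The index `h_j` of generalized majorization. -/
noncomputable def genMajIndex (m : ℕ) (d g : ℕ → ℤ) (j : ℕ) : ℕ :=
  sInf {i : ℕ | j ≤ i ∧ (m < i - j + 1 ∨ d (i - j + 1) < g i)}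

section GenMajIndex

variable {m : ℕ} {d g : ℕ → ℤ} {i j : ℕ}

theorem genMajIndex_le : genMajIndex m d g j ≤ m + j :=
  Nat.sInf_le ⟨by omega, Or.inl (by omega)⟩

theorem le_genMajIndex : j ≤ genMajIndex m d g j :=
  (Nat.sInf_mem (s := {i : ℕ | j ≤ i ∧ (m < i - j + 1 ∨ d (i - j + 1) < g i)})
    ⟨m + j, by omega, Or.inl (by omega)⟩).1

theorem le_of_lt_genMajIndex (hji : j ≤ i) (hi : i < genMajIndex m d g j) :
    g i ≤ d (i - j + 1) := by
  have := Nat.notMem_of_lt_sInf hi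
  simp only [Set.mem_ofPred_eq, not_and, not_or, not_lt] at this
  exact (this hji).2

end GenMajIndex

theorem sum_Icc_genMajIndex_sub_le (N x : ℕ) (c : ℕ → ℤ)
    (hc : ∀ i, 1 ≤ i → i < N → c (i + 1) ≤ c i) {j : ℕ} (hj : 1 ≤ j) (hjx : j ≤ x) :
    ∑ i ∈ Icc 1 (genMajIndex (N - x) (fun i => c (i + x)) c j), c i
      - ∑ i ∈ Icc 1 (genMajIndex (N - x) (fun i => c (i + x)) c j - j), c (i + x)
      ≤ ∑ i ∈ Icc 1 j, c i := by
  set d : ℕ → ℤ := fun i => c (i + x)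
  set h := genMajIndex (N - x) d c j
  have hjh : j ≤ h := le_genMajIndex
  have hhm : h ≤ N - x + j := genMajIndex_le
  have hshift : ∑ i ∈ Icc 1 (h - j), c (i + j) ≤ ∑ i ∈ Icc 1 (h - j), d i := by
    refine sum_le_sum fun k hk => ?_
    rw [mem_Icc] at hk
    have hmin : c (k - 1 + j) ≤ d (k - 1 + j - j + 1) :=
      le_of_lt_genMajIndex (m := N - x) (by omega) (by omega)
    calc c (k + j) = c (k - 1 + j + 1) := by congr 1; omega
      _ ≤ c (k - 1 + j) := hc _ (by omega) (by omega)
      _ ≤ d (k - 1 + j - j + 1) := hmin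
      _ = d k := by congr 1; omega
  have hsplit := sum_Icc_one_add c j (h - j)
  rw [Nat.add_sub_cancel' hjh] at hsplit
  linarith

theorem stmt12_general (N x : ℕ) (c : ℕ → ℤ)
    (hcmono : ∀ i, 1 ≤ i → i < N → c (i + 1) ≤ c i)
    (atil : ℕ → ℤ)
    (hasum : ∑ i ∈ Finset.Icc 1 x, atil i = ∑ i ∈ Finset.Icc 1 x, c i)
    (hmaj : ∀ j, 1 ≤ j → j ≤ x - 1 →
      ∑ i ∈ Finset.Icc 1 j, c i ≤ ∑ i ∈ Finset.Icc 1 j, atil i) :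
    GenMaj (N - x) x (fun i => c (i + x)) atil c := by
  refine ⟨fun _ _ _ => le_rfl, fun j hj hjx => ?_, ?_⟩
  · have hmaj' : ∑ i ∈ Icc 1 j, c i ≤ ∑ i ∈ Icc 1 j, atil i := by
      rcases hjx.lt_or_eq with hlt | rfl
      · exact hmaj j hj (by omega)
      · exact hasum.ge
    exact (sum_Icc_genMajIndex_sub_le N x c hcmono hj hjx).trans hmaj'
  · rw [add_comm, sum_Icc_one_add, hasum, add_comm]

/-- If `ã` is non-increasing with `Σ ã = Σ_{1..x} c` and `(c_1,…,c_x) ≺ ã`,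
then `c ≺' (d, ã)` for `d` the truncation `d_i = c_{i+x}`. -/
theorem stmt12 (N x : ℕ) (hx : x ≤ N) (c : ℕ → ℤ)
    (hcmono : ∀ i, 1 ≤ i → i < N → c (i + 1) ≤ c i)
    (hcnn : ∀ i, 1 ≤ i → i ≤ N → 0 ≤ c i)
    (atil : ℕ → ℤ)
    (hamono : ∀ i, 1 ≤ i → i < x → atil (i + 1) ≤ atil i)
    (hasum : ∑ i ∈ Finset.Icc 1 x, atil i = ∑ i ∈ Finset.Icc 1 x, c i)
    (hmaj : ∀ j, 1 ≤ j → j ≤ x - 1 →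
      ∑ i ∈ Finset.Icc 1 j, c i ≤ ∑ i ∈ Finset.Icc 1 j, atil i) :
    GenMaj (N - x) x (fun i => c (i + x)) atil c :=
  stmt12_general N x c hcmono atil hasum hmaj
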